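/- arXiv:2501.09582 — 2 statements merged into one kernel-verified Lean document; each statement's English description precedes it below -/
import Mathlib

section
/- Let k ≥ 4 be an integer and q ∈ (q_k, 2). Then the thickness of the compact set π_q(S_k) satisfies τ(π_q(S_k)) > q^{k−3}. -/
open Set

/-- Projection map: the value of the (0-indexed) digit sequence `a` in base `q`,
`π_q(a) = Σ_{j=0}^∞ a_j q^{-(j+1)}`. -/
noncomputable def piQ (q : ℝ) (a : ℕ → ℝ) : ℝ := ∑' j : ℕ, a j / q ^ (j + 1)

/-- `a` is a sequence of digits in `{0,1}`. -/
def IsDigitSeq (a : ℕ → ℝ) : Prop := ∀ j, a j = 0 ∨ a j = 1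

/-- `a` is a sequence of digits in `{-1,0,1}`. -/
def IsExtDigitSeq (a : ℕ → ℝ) : Prop := ∀ j, a j = -1 ∨ a j = 0 ∨ a j = 1

/-- The set of base-`q` expansions of `x`. -/
def SigmaSet (q x : ℝ) : Set (ℕ → ℝ) := {a | IsDigitSeq a ∧ piQ q a = x}

/-- The interval `I_q = [0, 1/(q-1)]`. -/
def Iq (q : ℝ) : Set ℝ := Set.Icc 0 (1 / (q - 1))

/-- The switch region `J_q = [1/q, 1/(q(q-1))]`. -/
def Jq (q : ℝ) : Set ℝ := Set.Icc (1 / q) (1 / (q * (q - 1)))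

/-- The set of points of `I_q` having exactly `m` base-`q` expansions. -/
def UqM (q : ℝ) (m : ℕ∞) : Set ℝ := {x | x ∈ Iq q ∧ (SigmaSet q x).encard = m}

/-- The set of points of `I_q` having a unique base-`q` expansion. -/
def Uq (q : ℝ) : Set ℝ := UqM q 1

/-- `B_m`: the set of bases `q ∈ (1,2)` for which some point has exactly `m` expansions. -/
def Bset (m : ℕ∞) : Set ℝ := {q | q ∈ Set.Ioo (1 : ℝ) 2 ∧ (UqM q m).Nonempty}

/-- `x` is the `k`-Bonacci number: the root in `(1,2)` of `x^k = x^{k-1} + ⋯ + x + 1`. -/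
def IsBonacci (k : ℕ) (x : ℝ) : Prop :=
  x ∈ Set.Ioo (1 : ℝ) 2 ∧ x ^ k = ∑ i ∈ Finset.range k, x ^ i

/-- `a` contains no occurrence of the word `01^k` as a consecutive block. -/
def AvoidsWord01 (k : ℕ) (a : ℕ → ℝ) : Prop :=
  ∀ i, ¬(a i = 0 ∧ ∀ j, 1 ≤ j → j ≤ k → a (i + j) = 1)

/-- `a` contains no occurrence of the word `10^k` as a consecutive block. -/
def AvoidsWord10 (k : ℕ) (a : ℕ → ℝ) : Prop :=
  ∀ i, ¬(a i = 1 ∧ ∀ j, 1 ≤ j → j ≤ k → a (i + j) = 0)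

/-- `S_k`: the set of `{0,1}`-sequences avoiding the words `01^k` and `10^k`. -/
def Sset (k : ℕ) : Set (ℕ → ℝ) := {a | IsDigitSeq a ∧ AvoidsWord01 k a ∧ AvoidsWord10 k a}

/-- `g_{q,k} = f_1^{-(k-1)} ∘ f_0^{-1}`, where `f_0^{-1}(y) = y/q` and `f_1^{-1}(y) = (y+1)/q`. -/
noncomputable def gMap (q : ℝ) (k : ℕ) (x : ℝ) : ℝ := (fun y => (y + 1) / q)^[k - 1] (x / q)

/-- The maps `f_0(x) = qx` (for `b = false`) and `f_1(x) = qx - 1` (for `b = true`). -/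
noncomputable def fDigit (q : ℝ) (b : Bool) (x : ℝ) : ℝ := if b then q * x - 1 else q * x

/-- `(a, b)` is a bounded gap of `C`: a bounded connected component of `ℝ \ C`. -/
def IsGap (C : Set ℝ) (a b : ℝ) : Prop :=
  a < b ∧ a ∈ C ∧ b ∈ C ∧ Set.Ioo a b ∩ C = ∅

/-- The left endpoint of the bridge of `C` lying immediately to the left of the gap `(a, b)`:
the right endpoint of the nearest gap to the left having diameter at least `b - a`
(or `min C` if there is no such gap). -/
noncomputable def leftBridgeStart (C : Set ℝ) (a b : ℝ) : ℝ :=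
  sSup ({sInf C} ∪ {d | ∃ c, IsGap C c d ∧ d ≤ a ∧ b - a ≤ d - c})

/-- The right endpoint of the bridge of `C` lying immediately to the right of the gap `(a, b)`. -/
noncomputable def rightBridgeEnd (C : Set ℝ) (a b : ℝ) : ℝ :=
  sInf ({sSup C} ∪ {c | ∃ d, IsGap C c d ∧ b ≤ c ∧ b - a ≤ d - c})

/-- The (Newhouse) thickness of a compact set `C ⊆ ℝ`: the infimum over all bounded gaps `G`
of the ratio of the length of the bridge on either side of `G` to the length of `G`
(`∞` if `C` has no bounded gap). -/
noncomputable def thickness (C : Set ℝ) : ENNReal :=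
  ⨅ p : {p : ℝ × ℝ // IsGap C p.1 p.2},
    ENNReal.ofReal
      (min ((p.1.1 - leftBridgeStart C p.1.1 p.1.2) / (p.1.2 - p.1.1))
        ((rightBridgeEnd C p.1.1 p.1.2 - p.1.2) / (p.1.2 - p.1.1)))

/-- `B` is contained in a gap of `A`, i.e. in a connected component of `ℝ \ A`. -/
def ContainedInGap (B A : Set ℝ) : Prop :=
  ∃ x ∈ Aᶜ, B ⊆ connectedComponentIn Aᶜ x

/-- Two sets are interleaved if neither is contained in a gap of the other. -/
def Interleaved (A B : Set ℝ) : Prop :=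
  ¬ContainedInGap B A ∧ ¬ContainedInGap A B

/-- `A` and `B` are `ε`-strongly interleaved: any compact sets within Hausdorff distance `ε`
of `A` and `B` respectively are interleaved. -/
def StronglyInterleaved (ε : ℝ) (A B : Set ℝ) : Prop :=
  ∀ A' B' : Set ℝ, IsCompact A' → IsCompact B' →
    EMetric.hausdorffEdist A A' ≤ ENNReal.ofReal ε →
    EMetric.hausdorffEdist B B' ≤ ENNReal.ofReal ε → Interleaved A' B'

/-- The sequence `0^{k-3}(01^{k-1})^∞` (0-indexed). -/
noncomputable def seqG (k : ℕ) : ℕ → ℝ := fun j =>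
  if j < k - 3 then 0 else if (j - (k - 3)) % k = 0 then 0 else 1

/-- The sequence `1^{k-3}(10^{k-1})^∞` (0-indexed). -/
noncomputable def seqH (k : ℕ) : ℕ → ℝ := fun j =>
  if j < k - 3 then 1 else if (j - (k - 3)) % k = 0 then 1 else 0

/-- The sequence `(1^{k-1}0)^∞` (0-indexed). -/
noncomputable def seqP (k : ℕ) : ℕ → ℝ := fun j => if j % k = k - 1 then 0 else 1

/-!
Let `η₀ = π_q((01^{k-1})^∞)` and `η₁ = π_q((10^{k-1})^∞)`. In a sequence of `S_k` every `0` is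
followed by another `0` within `k` places, so a tail beginning with `0` is worth at most `η₀`;
by the symmetry `a ↦ 1 - a`, a tail beginning with `1` is worth at least `η₁`. For `q > q_k` one
has `q^k(2 - q) < 1`, i.e. `η₀ < η₁`, so `π_q` is lexicographically increasing on `S_k` and the
gaps of `π_q(S_k)` are exactly `(π_q(w0(01^{k-1})^∞), π_q(w1(10^{k-1})^∞))`, of length
`q^{-|w|}(η₁ - η₀)`. The points `π_q(w01(0^{k-1}1)^∞)` and `π_q(w10(1^{k-1}0)^∞)` lie in the set
at distance `q^{-|w|-1}(qη₀ - η₁)` from this gap, and every gap in between comes from a longer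
prefix, hence is shorter. So the thickness is at least `(qη₀ - η₁)/(q(η₁ - η₀))`, and this
exceeds `q^{k-3}`.
-/
open Finset

section Digits

variable {q : ℝ} {k : ℕ} {a : ℕ → ℝ}

lemma IsDigitSeq.nonneg (ha : IsDigitSeq a) (j : ℕ) : 0 ≤ a j := by
  rcases ha j with h | h <;> simp [h]

lemma IsDigitSeq.le_one (ha : IsDigitSeq a) (j : ℕ) : a j ≤ 1 := by
  rcases ha j with h | h <;> simp [h]

lemma IsDigitSeq.summable (ha : IsDigitSeq a) (hq : 1 < q) :
    Summable fun j => a j / q ^ (j + 1) := by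
  have hgeom : Summable fun j : ℕ => (1 / q) ^ (j + 1) :=
    (summable_nat_add_iff 1).2 <| summable_geometric_of_lt_one (by positivity)
      ((div_lt_one (by positivity)).2 hq)
  refine hgeom.of_nonneg_of_le (fun j => div_nonneg (ha.nonneg j) (by positivity)) fun j => ?_
  rw [one_div_pow]
  exact div_le_div_of_nonneg_right (ha.le_one j) (by positivity)

lemma piQ_one (hq : 1 < q) : piQ q (fun _ => 1) = 1 / (q - 1) := by
  have hq0 : 0 < q := by positivity
  have hterm : (fun j : ℕ => (1 : ℝ) / q ^ (j + 1)) = fun j => (1 / q) * (1 / q) ^ j := by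
    funext j; rw [← one_div_pow, pow_succ']
  rw [piQ, hterm, tsum_mul_left, tsum_geometric_of_lt_one (by positivity)
    ((div_lt_one hq0).2 hq)]
  field_simp

lemma piQ_nonneg (hq : 1 < q) (ha : IsDigitSeq a) : 0 ≤ piQ q a :=
  tsum_nonneg fun j => div_nonneg (ha.nonneg j) (by positivity)

lemma piQ_le_one_div_sub_one (hq : 1 < q) (ha : IsDigitSeq a) : piQ q a ≤ 1 / (q - 1) := by
  rw [← piQ_one hq]
  exact (ha.summable hq).tsum_le_tsum
    (fun j => div_le_div_of_nonneg_right (ha.le_one j) (by positivity))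
    (IsDigitSeq.summable (fun _ => Or.inr rfl) hq)

noncomputable def piQPrefix (q : ℝ) (a : ℕ → ℝ) (i : ℕ) : ℝ :=
  ∑ j ∈ range i, a j / q ^ (j + 1)

lemma piQPrefix_congr {b : ℕ → ℝ} {i : ℕ} (h : ∀ j < i, a j = b j) :
    piQPrefix q a i = piQPrefix q b i :=
  sum_congr rfl fun j hj => by rw [h j (mem_range.1 hj)]

lemma piQPrefix_succ (i : ℕ) : piQPrefix q a (i + 1) = piQPrefix q a i + a i / q ^ (i + 1) :=
  sum_range_succ _ _

lemma piQ_eq_piQPrefix_add (hq : 1 < q) (ha : IsDigitSeq a) (i : ℕ) :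
    piQ q a = piQPrefix q a i + piQ q (fun m => a (m + i)) / q ^ i := by
  rw [piQ, ← (ha.summable hq).sum_add_tsum_nat_add i, piQPrefix, piQ, ← tsum_div_const]
  refine congrArg _ (tsum_congr fun m => ?_)
  rw [div_div, ← pow_add]
  ring_nf

def digitFlip (a : ℕ → ℝ) : ℕ → ℝ := fun j => 1 - a j

lemma IsDigitSeq.digitFlip (ha : IsDigitSeq a) : IsDigitSeq (digitFlip a) := fun j => by
  rcases ha j with h | h <;> simp [_root_.digitFlip, h]

lemma piQ_digitFlip (hq : 1 < q) (ha : IsDigitSeq a) :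
    piQ q (digitFlip a) = 1 / (q - 1) - piQ q a := by
  rw [← piQ_one hq, piQ, piQ, piQ, ← (IsDigitSeq.summable (fun _ => Or.inr rfl) hq).tsum_sub
    (ha.summable hq)]
  simp only [digitFlip, sub_div]

lemma AvoidsWord10.digitFlip (ha : AvoidsWord10 k a) : AvoidsWord01 k (digitFlip a) :=
  fun i ⟨hi, hw⟩ => ha i ⟨by simp only [_root_.digitFlip] at hi; linarith,
    fun j hj hjk => by have := hw j hj hjk; simp only [_root_.digitFlip] at this; linarith⟩

lemma AvoidsWord01.digitFlip (ha : AvoidsWord01 k a) : AvoidsWord10 k (digitFlip a) :=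
  fun i ⟨hi, hw⟩ => ha i ⟨by simp only [_root_.digitFlip] at hi; linarith,
    fun j hj hjk => by have := hw j hj hjk; simp only [_root_.digitFlip] at this; linarith⟩

lemma digitFlip_mem_Sset (ha : a ∈ Sset k) : digitFlip a ∈ Sset k :=
  ⟨ha.1.digitFlip, ha.2.2.digitFlip, ha.2.1.digitFlip⟩

lemma AvoidsWord01.shift (ha : AvoidsWord01 k a) (i : ℕ) : AvoidsWord01 k fun m => a (m + i) :=
  fun n ⟨hn, hw⟩ => ha (n + i) ⟨hn, fun j hj hjk => by rw [add_right_comm]; exact hw j hj hjk⟩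

lemma AvoidsWord10.shift (ha : AvoidsWord10 k a) (i : ℕ) : AvoidsWord10 k fun m => a (m + i) :=
  fun n ⟨hn, hw⟩ => ha (n + i) ⟨hn, fun j hj hjk => by rw [add_right_comm]; exact hw j hj hjk⟩

end Digits

section Tails

variable {q : ℝ} {k : ℕ} {a : ℕ → ℝ}

/-- `(01^{k-1})^∞`, the largest sequence in `S_k` that begins with `0`. -/
def maxTail (k : ℕ) : ℕ → ℝ := fun j => if k ∣ j then 0 else 1

def minTail (k : ℕ) : ℕ → ℝ := digitFlip (maxTail k)

lemma isDigitSeq_maxTail : IsDigitSeq (maxTail k) := fun j => by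
  unfold maxTail; split_ifs <;> simp

lemma isDigitSeq_minTail : IsDigitSeq (minTail k) := isDigitSeq_maxTail.digitFlip

lemma maxTail_add_self (m : ℕ) : maxTail k (m + k) = maxTail k m := by
  simp only [maxTail, Nat.dvd_add_self_right]

lemma maxTail_of_pos_of_lt {j : ℕ} (h0 : 0 < j) (hj : j < k) : maxTail k j = 1 :=
  if_neg (Nat.not_dvd_of_pos_of_lt h0 hj)

lemma piQ_maxTail_add_piQ_minTail (hq : 1 < q) :
    piQ q (maxTail k) + piQ q (minTail k) = 1 / (q - 1) := by
  rw [minTail, piQ_digitFlip hq isDigitSeq_maxTail]; ring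

lemma AvoidsWord01.exists_first_zero (hd : IsDigitSeq a) (ha : AvoidsWord01 k a) (h0 : a 0 = 0) :
    ∃ r, 1 ≤ r ∧ r ≤ k ∧ a r = 0 ∧ ∀ j, 1 ≤ j → j < r → a j = 1 := by
  classical
  have hex : ∃ r, 1 ≤ r ∧ r ≤ k ∧ a r = 0 := by
    by_contra! h
    exact ha 0 ⟨h0, fun j hj hjk => by
      rcases hd (0 + j) with h' | h'
      · exact absurd h' (by simpa using h j hj hjk)
      · exact h'⟩
  obtain ⟨hr1, hrk, hr0⟩ := Nat.find_spec hex
  refine ⟨Nat.find hex, hr1, hrk, hr0, fun j hj hjr => ?_⟩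
  rcases hd j with h' | h'
  · exact absurd ⟨hj, by omega, h'⟩ (Nat.find_min hex hjr)
  · exact h'

/-- That is, `π_q(01^{r-1}(01^{k-1})^∞) ≤ π_q((01^{k-1})^∞)`. -/
lemma piQPrefix_maxTail_add_le (hq : 1 < q) {r : ℕ} (hr : 1 ≤ r) (hrk : r ≤ k) :
    piQPrefix q (maxTail k) r + piQ q (maxTail k) / q ^ r ≤ piQ q (maxTail k) := by
  set η := piQ q (maxTail k)
  have hη : (q - 1) * η ≤ 1 := by
    have := piQ_le_one_div_sub_one hq (isDigitSeq_maxTail (k := k))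
    rwa [le_div_iff₀ (by linarith), mul_comm] at this
  have hmono : ∀ m, r ≤ m → m ≤ k →
      piQPrefix q (maxTail k) r + η / q ^ r ≤ piQPrefix q (maxTail k) m + η / q ^ m := by
    refine Nat.le_induction (fun _ => le_rfl) fun m hrm ih hm => (ih (by omega)).trans ?_
    rw [piQPrefix_succ, maxTail_of_pos_of_lt (by omega) (by omega)]
    have key : η / q ^ m = η / q ^ (m + 1) + (q - 1) * η / q ^ (m + 1) := by
      rw [pow_succ]; field_simp; ring
    have : (q - 1) * η / q ^ (m + 1) ≤ 1 / q ^ (m + 1) := by gcongr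
    linarith
  have hfix := piQ_eq_piQPrefix_add hq (isDigitSeq_maxTail (k := k)) k
  simp only [maxTail_add_self] at hfix
  exact (hmono k hrk le_rfl).trans hfix.ge

/-- Each return to a `0` contracts the excess of `π_q` over `π_q (maxTail k)` by a factor
`1/q`. -/
lemma piQ_sub_le_of_head_zero (hq : 1 < q) (N : ℕ) {t : ℕ → ℝ} (hd : IsDigitSeq t)
    (ha : AvoidsWord01 k t) (h0 : t 0 = 0) :
    piQ q t - piQ q (maxTail k) ≤ (1 / q) ^ N / (q - 1) := by
  induction N generalizing t with
  | zero =>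
    have := piQ_nonneg hq (isDigitSeq_maxTail (k := k))
    simpa using (sub_le_self _ this).trans (piQ_le_one_div_sub_one hq hd)
  | succ N ih =>
    obtain ⟨r, hr, hrk, hr0, hones⟩ := ha.exists_first_zero hd h0
    have hpref : piQPrefix q t r = piQPrefix q (maxTail k) r := piQPrefix_congr fun j hj => by
      rcases Nat.eq_zero_or_pos j with rfl | hj0
      · simp [h0, maxTail]
      · rw [hones j hj0 hj, maxTail_of_pos_of_lt hj0 (by omega)]
    have htail := ih (fun m => hd (m + r)) (ha.shift r) (by simpa using hr0)
    have hle := piQPrefix_maxTail_add_le hq hr hrk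
    have hqr : q ≤ q ^ r := by simpa using pow_le_pow_right₀ hq.le hr
    have hB : 0 ≤ (1 / q) ^ N / (q - 1) := div_nonneg (by positivity) (by linarith)
    calc piQ q t - piQ q (maxTail k)
        ≤ (piQ q (fun m => t (m + r)) - piQ q (maxTail k)) / q ^ r := by
          rw [piQ_eq_piQPrefix_add hq hd r, hpref, sub_div]; linarith
      _ ≤ (1 / q) ^ N / (q - 1) / q ^ r := by gcongr
      _ ≤ (1 / q) ^ N / (q - 1) / q := by gcongr
      _ = (1 / q) ^ (N + 1) / (q - 1) := by rw [pow_succ]; ring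

lemma piQ_le_of_head_zero (hq : 1 < q) (hd : IsDigitSeq a) (ha : AvoidsWord01 k a) (h0 : a 0 = 0) :
    piQ q a ≤ piQ q (maxTail k) := by
  have hlim : Filter.Tendsto (fun N => (1 / q) ^ N / (q - 1)) Filter.atTop (nhds 0) := by
    simpa using (tendsto_pow_atTop_nhds_zero_of_lt_one (by positivity)
      ((div_lt_one (by positivity)).2 hq)).div_const (q - 1)
  exact sub_nonpos.1 (ge_of_tendsto' hlim fun N => piQ_sub_le_of_head_zero hq N hd ha h0)

lemma le_piQ_of_head_one (hq : 1 < q) (hd : IsDigitSeq a) (ha : AvoidsWord10 k a) (h1 : a 0 = 1) :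
    piQ q (minTail k) ≤ piQ q a := by
  have := piQ_le_of_head_zero hq hd.digitFlip ha.digitFlip (by simp [digitFlip, h1])
  rw [piQ_digitFlip hq hd] at this
  linarith [piQ_maxTail_add_piQ_minTail (k := k) hq]

lemma piQ_le_of_apply_eq_zero (hq : 1 < q) (hd : IsDigitSeq a) (ha : AvoidsWord01 k a) {i : ℕ}
    (hi : a i = 0) : piQ q a ≤ piQPrefix q a i + piQ q (maxTail k) / q ^ i := by
  rw [piQ_eq_piQPrefix_add hq hd i]
  gcongr
  exact piQ_le_of_head_zero hq (fun m => hd (m + i)) (ha.shift i) (by simpa using hi)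

lemma le_piQ_of_apply_eq_one (hq : 1 < q) (hd : IsDigitSeq a) (ha : AvoidsWord10 k a) {i : ℕ}
    (hi : a i = 1) : piQPrefix q a i + piQ q (minTail k) / q ^ i ≤ piQ q a := by
  rw [piQ_eq_piQPrefix_add hq hd i]
  gcongr
  exact le_piQ_of_head_one hq (fun m => hd (m + i)) (ha.shift i) (by simpa using hi)

end Tails

section Splice

variable {q : ℝ} {k : ℕ} {a b : ℕ → ℝ}

lemma exists_firstDiff_le {i : ℕ} (hi : a i ≠ b i) :
    ∃ m ≤ i, (∀ j < m, a j = b j) ∧ a m ≠ b m := by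
  classical
  have hex : ∃ m, a m ≠ b m := ⟨i, hi⟩
  exact ⟨Nat.find hex, Nat.find_min' hex hi, fun j hj => not_not.1 (Nat.find_min hex hj),
    Nat.find_spec hex⟩

lemma IsDigitSeq.eq_zero_and_eq_one_or (ha : IsDigitSeq a) (hb : IsDigitSeq b) {m : ℕ}
    (h : a m ≠ b m) : a m = 0 ∧ b m = 1 ∨ a m = 1 ∧ b m = 0 := by
  rcases ha m with h1 | h1 <;> rcases hb m with h2 | h2 <;> simp_all

lemma piQ_lt_of_firstDiff (hq : 1 < q) (hη : piQ q (maxTail k) < piQ q (minTail k))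
    (ha : a ∈ Sset k) (hb : b ∈ Sset k) {m : ℕ} (hab : ∀ j < m, a j = b j) (ham : a m = 0)
    (hbm : b m = 1) : piQ q a < piQ q b := by
  calc piQ q a ≤ piQPrefix q a m + piQ q (maxTail k) / q ^ m :=
        piQ_le_of_apply_eq_zero hq ha.1 ha.2.1 ham
    _ < piQPrefix q b m + piQ q (minTail k) / q ^ m := by
        rw [piQPrefix_congr hab]; gcongr
    _ ≤ piQ q b := le_piQ_of_apply_eq_one hq hb.1 hb.2.2 hbm

lemma eq_of_piQ_mem_Icc (hq : 1 < q) (hη : piQ q (maxTail k) < piQ q (minTail k))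
    {lo hi ξ : ℕ → ℝ} (hlo : lo ∈ Sset k) (hhi : hi ∈ Sset k) (hξ : ξ ∈ Sset k) {N : ℕ}
    (hN : ∀ j < N, lo j = hi j) (h₁ : piQ q lo ≤ piQ q ξ) (h₂ : piQ q ξ ≤ piQ q hi) :
    ∀ j < N, ξ j = lo j := by
  intro i hiN
  by_contra hne
  obtain ⟨m, hmi, hagree, hm⟩ := exists_firstDiff_le hne
  rcases hξ.1.eq_zero_and_eq_one_or hlo.1 hm with ⟨hξm, hlom⟩ | ⟨hξm, hlom⟩
  · exact (piQ_lt_of_firstDiff hq hη hξ hlo hagree hξm hlom).not_ge h₁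
  · refine (piQ_lt_of_firstDiff hq hη hhi hξ (fun j hj => ?_) ?_ hξm).not_ge h₂
    · rw [hagree j hj, hN j (by omega)]
    · rw [← hN m (by omega), hlom]

def splice (a : ℕ → ℝ) (s : ℕ) (p : ℕ → ℝ) : ℕ → ℝ := fun j => if j < s then a j else p (j - s)

lemma splice_of_lt {p : ℕ → ℝ} {s j : ℕ} (h : j < s) : splice a s p j = a j := if_pos h

lemma splice_of_le {p : ℕ → ℝ} {s j : ℕ} (h : s ≤ j) : splice a s p j = p (j - s) :=
  if_neg (not_lt.2 h)

lemma IsDigitSeq.splice (ha : IsDigitSeq a) {p : ℕ → ℝ} (hp : IsDigitSeq p) (s : ℕ) :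
    IsDigitSeq (splice a s p) := fun j => by
  unfold _root_.splice; split_ifs
  exacts [ha j, hp _]

lemma piQ_splice (hq : 1 < q) (ha : IsDigitSeq a) {p : ℕ → ℝ} (hp : IsDigitSeq p) (s : ℕ) :
    piQ q (splice a s p) = piQPrefix q a s + piQ q p / q ^ s := by
  rw [piQ_eq_piQPrefix_add hq (ha.splice hp s) s, piQPrefix_congr fun j hj => splice_of_lt hj]
  simp only [splice_of_le (Nat.le_add_left s _), Nat.add_sub_cancel]

lemma splice_maxTail_eq_zero_iff {s j : ℕ} (h : s ≤ j) :
    splice a s (maxTail k) j = 0 ↔ k ∣ j - s := by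
  rw [splice_of_le h, maxTail]; split_ifs <;> simp_all

lemma AvoidsWord01.splice_maxTail (hk : 1 ≤ k) (ha : AvoidsWord01 k a) (s : ℕ) :
    AvoidsWord01 k (splice a s (maxTail k)) := by
  rintro i ⟨hi, hw⟩
  rcases lt_or_ge (i + k) s with hik | hik
  · exact ha i ⟨by rwa [splice_of_lt (by omega)] at hi, fun j hj hjk => by
      rw [← splice_of_lt (a := a) (p := maxTail k) (by omega : i + j < s)]; exact hw j hj hjk⟩
  rcases le_or_gt s i with hsi | hsi
  · have h0 : splice a s (maxTail k) (i + k) = 0 := (splice_maxTail_eq_zero_iff (by omega)).2 (by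
      rw [show i + k - s = i - s + k by omega]
      exact Nat.dvd_add_self_right.2 ((splice_maxTail_eq_zero_iff hsi).1 hi))
    linarith [hw k hk le_rfl]
  · have h0 : splice a s (maxTail k) s = 0 := (splice_maxTail_eq_zero_iff le_rfl).2 (by simp)
    have h1 := hw (s - i) (by omega) (by omega)
    rw [show i + (s - i) = s by omega] at h1
    linarith

lemma AvoidsWord10.splice_maxTail (hk : 2 ≤ k) (ha : AvoidsWord10 k a) {s : ℕ}
    (hs : a s = 0 ∨ 1 ≤ s ∧ a (s - 1) = 1) : AvoidsWord10 k (splice a s (maxTail k)) := by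
  rintro i ⟨hi, hw⟩
  rcases lt_or_ge (i + k) s with hik | hik
  · exact ha i ⟨by rwa [splice_of_lt (by omega)] at hi, fun j hj hjk => by
      rw [← splice_of_lt (a := a) (p := maxTail k) (by omega : i + j < s)]; exact hw j hj hjk⟩
  rcases le_or_gt s i with hsi | hsi
  · have h1 := (splice_maxTail_eq_zero_iff (by omega)).1 (hw 1 le_rfl (by omega))
    have h2 := (splice_maxTail_eq_zero_iff (by omega)).1 (hw 2 (by omega) (by omega))
    rw [show i + 2 - s = i + 1 - s + 1 by omega, Nat.dvd_add_right h1] at h2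
    exact absurd (Nat.le_of_dvd one_pos h2) (by omega)
  rcases lt_or_eq_of_le hik with hik | hik
  · have h1 := hw (s + 1 - i) (by omega) (by omega)
    rw [show i + (s + 1 - i) = s + 1 by omega, splice_maxTail_eq_zero_iff (by omega),
      show s + 1 - s = 1 by omega, Nat.dvd_one] at h1
    omega
  rcases hs with hs | ⟨hs1, hs⟩
  · refine ha i ⟨by rwa [splice_of_lt (by omega)] at hi, fun j hj hjk => ?_⟩
    rcases lt_or_eq_of_le hjk with hjk | hjk
    · rw [← splice_of_lt (a := a) (p := maxTail k) (by omega : i + j < s)]; exact hw j hj hjk.le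
    · rwa [hjk, ← hik]
  · have h1 := hw (k - 1) (by omega) (by omega)
    rw [show i + (k - 1) = s - 1 by omega, splice_of_lt (by omega), hs] at h1
    exact one_ne_zero h1

lemma splice_maxTail_mem_Sset (hk : 2 ≤ k) (ha : a ∈ Sset k) {s : ℕ}
    (hs : a s = 0 ∨ 1 ≤ s ∧ a (s - 1) = 1) : splice a s (maxTail k) ∈ Sset k :=
  ⟨ha.1.splice isDigitSeq_maxTail s, ha.2.1.splice_maxTail (by omega) s,
    ha.2.2.splice_maxTail hk hs⟩

lemma splice_minTail_mem_Sset (hk : 2 ≤ k) (ha : a ∈ Sset k) {s : ℕ}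
    (hs : a s = 1 ∨ 1 ≤ s ∧ a (s - 1) = 0) : splice a s (minTail k) ∈ Sset k := by
  have hflip : splice a s (minTail k) = digitFlip (splice (digitFlip a) s (maxTail k)) := by
    funext j
    simp only [splice, digitFlip, minTail]
    split_ifs <;> ring
  rw [hflip]
  refine digitFlip_mem_Sset (splice_maxTail_mem_Sset hk (digitFlip_mem_Sset ha) ?_)
  simp only [digitFlip]
  rcases hs with hs | ⟨hs1, hs⟩
  · exact Or.inl (by rw [hs]; ring)
  · exact Or.inr ⟨hs1, by rw [hs]; ring⟩

end Splice

section Gaps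

variable {C : Set ℝ} {a b c d x : ℝ}

lemma IsGap.notMem_Ioo (h : IsGap C c d) (hx : x ∈ C) : x ∉ Ioo c d := fun hx' => by
  have : x ∈ Ioo c d ∩ C := ⟨hx', hx⟩
  rwa [h.2.2.2] at this

lemma IsGap.eq_left_of_mem (h : IsGap C c d) (hx : x ∈ C) (hcx : c ≤ x) (hxd : x < d) : x = c :=
  le_antisymm (not_lt.1 fun hxc => h.notMem_Ioo hx ⟨hxc, hxd⟩) hcx

lemma IsGap.eq_right_of_mem (h : IsGap C c d) (hx : x ∈ C) (hcx : c < x) (hxd : x ≤ d) : x = d :=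
  le_antisymm hxd (not_lt.1 fun hxd' => h.notMem_Ioo hx ⟨hcx, hxd'⟩)

lemma leftBridgeStart_le (hC : BddBelow C) {v : ℝ} (hv : v ∈ C)
    (h : ∀ c d, IsGap C c d → v ≤ c → d ≤ a → d - c < b - a) : leftBridgeStart C a b ≤ v := by
  refine csSup_le ⟨_, Or.inl rfl⟩ ?_
  rintro y (rfl | ⟨c, hgap, hya, hlen⟩)
  · exact csInf_le hC hv
  · by_contra! hvy
    have hvc : v ≤ c := not_lt.1 fun hcv => hgap.notMem_Ioo hv ⟨hcv, hvy⟩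
    exact (h c y hgap hvc hya).not_ge hlen

lemma le_rightBridgeEnd (hC : BddAbove C) {u : ℝ} (hu : u ∈ C)
    (h : ∀ c d, IsGap C c d → b ≤ c → d ≤ u → d - c < b - a) : u ≤ rightBridgeEnd C a b := by
  refine le_csInf ⟨_, Or.inl rfl⟩ ?_
  rintro y (rfl | ⟨d, hgap, hby, hlen⟩)
  · exact le_csSup hC hu
  · by_contra! hyu
    have hdu : d ≤ u := not_lt.1 fun hud => hgap.notMem_Ioo hu ⟨hyu, hud⟩
    exact (h y d hgap hby hdu).not_ge hlen

lemma ofReal_le_thickness {τ : ℝ}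
    (h : ∀ a b, IsGap C a b →
      τ * (b - a) ≤ a - leftBridgeStart C a b ∧ τ * (b - a) ≤ rightBridgeEnd C a b - b) :
    ENNReal.ofReal τ ≤ thickness C := by
  refine le_iInf fun ⟨⟨a, b⟩, hgap⟩ => ENNReal.ofReal_le_ofReal ?_
  have hab : 0 < b - a := sub_pos.2 hgap.1
  obtain ⟨hl, hr⟩ := h a b hgap
  exact le_min ((le_div_iff₀ hab).2 hl) ((le_div_iff₀ hab).2 hr)

end Gaps

section GapsOfSk

variable {q : ℝ} {k : ℕ} {a b c d : ℝ}

lemma IsGap.exists_firstDiff (hgap : IsGap (piQ q '' Sset k) c d) {γ δ : ℕ → ℝ}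
    (hc : piQ q γ = c) (hd : piQ q δ = d) : ∃ m, (∀ j < m, γ j = δ j) ∧ γ m ≠ δ m := by
  obtain ⟨i, hi⟩ := Function.ne_iff.1 fun h : γ = δ => hgap.1.ne (by rw [← hc, ← hd, h])
  obtain ⟨m, -, hm⟩ := exists_firstDiff_le hi
  exact ⟨m, hm⟩

lemma IsGap.piQ_eq (hq : 1 < q) (hk : 2 ≤ k) (hη : piQ q (maxTail k) < piQ q (minTail k))
    (hgap : IsGap (piQ q '' Sset k) c d) {γ δ : ℕ → ℝ} (hγ : γ ∈ Sset k) (hδ : δ ∈ Sset k)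
    (hc : piQ q γ = c) (hd : piQ q δ = d) {m : ℕ} (hagree : ∀ j < m, γ j = δ j)
    (hm : γ m ≠ δ m) :
    γ m = 0 ∧ δ m = 1 ∧ c = piQPrefix q γ m + piQ q (maxTail k) / q ^ m ∧
      d = piQPrefix q γ m + piQ q (minTail k) / q ^ m := by
  obtain ⟨hγm, hδm⟩ : γ m = 0 ∧ δ m = 1 := by
    refine (hγ.1.eq_zero_and_eq_one_or hδ.1 hm).resolve_right fun ⟨hγm, hδm⟩ => ?_
    have := piQ_lt_of_firstDiff hq hη hδ hγ (fun j hj => (hagree j hj).symm) hδm hγm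
    exact hgap.1.not_ge (by rw [← hc, ← hd]; exact this.le)
  have hpref : piQPrefix q γ m = piQPrefix q δ m := piQPrefix_congr hagree
  refine ⟨hγm, hδm, (hgap.eq_left_of_mem ⟨_, splice_maxTail_mem_Sset hk hγ (Or.inl hγm),
    piQ_splice hq hγ.1 isDigitSeq_maxTail m⟩ ?_ ?_).symm,
    (hgap.eq_right_of_mem ⟨_, splice_minTail_mem_Sset hk hδ (Or.inl hδm),
    by rw [piQ_splice hq hδ.1 isDigitSeq_minTail m, hpref]⟩ ?_ ?_).symm⟩
  · exact hc ▸ piQ_le_of_apply_eq_zero hq hγ.1 hγ.2.1 hγm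
  · calc _ < piQPrefix q γ m + piQ q (minTail k) / q ^ m := by gcongr
      _ ≤ d := hpref ▸ hd ▸ le_piQ_of_apply_eq_one hq hδ.1 hδ.2.2 hδm
  · calc c ≤ piQPrefix q γ m + piQ q (maxTail k) / q ^ m :=
          hc ▸ piQ_le_of_apply_eq_zero hq hγ.1 hγ.2.1 hγm
      _ < _ := by gcongr
  · exact hpref ▸ hd ▸ le_piQ_of_apply_eq_one hq hδ.1 hδ.2.2 hδm

lemma IsGap.sub_le_of_cylinder (hq : 1 < q) (hk : 2 ≤ k)
    (hη : piQ q (maxTail k) < piQ q (minTail k)) (hgap : IsGap (piQ q '' Sset k) c d)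
    {lo hi : ℕ → ℝ} (hlo : lo ∈ Sset k) (hhi : hi ∈ Sset k) {N : ℕ} (hN : ∀ j < N, lo j = hi j)
    (hc : piQ q lo ≤ c) (hd : d ≤ piQ q hi) :
    d - c ≤ (piQ q (minTail k) - piQ q (maxTail k)) / q ^ N := by
  obtain ⟨γ, hγ, rfl⟩ := hgap.2.1
  obtain ⟨δ, hδ, rfl⟩ := hgap.2.2.1
  have hγN := eq_of_piQ_mem_Icc hq hη hlo hhi hγ hN hc (hgap.1.le.trans hd)
  have hδN := eq_of_piQ_mem_Icc hq hη hlo hhi hδ hN (hc.trans hgap.1.le) hd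
  obtain ⟨m, hagree, hm⟩ := hgap.exists_firstDiff rfl rfl
  have hNm : N ≤ m := not_lt.1 fun hmN => hm (by rw [hγN m hmN, hδN m hmN])
  obtain ⟨-, -, hc', hd'⟩ := hgap.piQ_eq hq hk hη hγ hδ rfl rfl hagree hm
  rw [hc', hd', add_sub_add_left_eq_sub, ← sub_div]
  gcongr; linarith

noncomputable def bridgeGapRatio (q : ℝ) (k : ℕ) : ℝ :=
  (q * piQ q (maxTail k) - piQ q (minTail k)) / (q * (piQ q (minTail k) - piQ q (maxTail k)))

lemma bddBelow_piQ_image (hq : 1 < q) : BddBelow (piQ q '' Sset k) :=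
  ⟨0, by rintro _ ⟨σ, hσ, rfl⟩; exact piQ_nonneg hq hσ.1⟩

lemma bddAbove_piQ_image (hq : 1 < q) : BddAbove (piQ q '' Sset k) :=
  ⟨1 / (q - 1), by rintro _ ⟨σ, hσ, rfl⟩; exact piQ_le_one_div_sub_one hq hσ.1⟩

/-- Witness: the point `π_q(w01(0^{k-1}1)^∞)`, with `w` the common prefix of `α` and `β`. -/
lemma bridgeGapRatio_mul_le_sub_leftBridgeStart (hq : 1 < q) (hk : 2 ≤ k)
    (hη : piQ q (maxTail k) < piQ q (minTail k)) (hgap : IsGap (piQ q '' Sset k) a b)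
    {α β : ℕ → ℝ} (hα : α ∈ Sset k) (hβ : β ∈ Sset k) (ha : piQ q α = a) (hb : piQ q β = b)
    {n : ℕ} (hagree : ∀ j < n, α j = β j) (hn : α n ≠ β n) :
    bridgeGapRatio q k * (b - a) ≤ a - leftBridgeStart (piQ q '' Sset k) a b := by
  obtain ⟨hαn, -, ha', hb'⟩ := hgap.piQ_eq hq hk hη hα hβ ha hb hagree hn
  set ν := splice α (n + 1) (minTail k)
  have hν : ν ∈ Sset k := splice_minTail_mem_Sset hk hα (Or.inr ⟨by omega, by simpa using hαn⟩)
  have hνval : piQ q ν = piQPrefix q α n + piQ q (minTail k) / q ^ (n + 1) := by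
    rw [piQ_splice hq hα.1 isDigitSeq_minTail, piQPrefix_succ, hαn, zero_div, add_zero]
  have hne : piQ q (minTail k) - piQ q (maxTail k) ≠ 0 := by linarith
  have hratio : bridgeGapRatio q k * (b - a)
      = (q * piQ q (maxTail k) - piQ q (minTail k)) / q ^ (n + 1) := by
    rw [ha', hb', bridgeGapRatio, pow_succ]; field_simp; ring
  calc bridgeGapRatio q k * (b - a) = a - piQ q ν := by
        rw [hratio, hνval, ha', pow_succ]; field_simp; ring
    _ ≤ a - leftBridgeStart (piQ q '' Sset k) a b := by
      refine sub_le_sub_left (leftBridgeStart_le (bddBelow_piQ_image hq) ⟨ν, hν, rfl⟩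
        fun c d hgap' hνc hda => ?_) a
      have hN : ∀ j < n + 1, ν j = α j := fun j hj => splice_of_lt hj
      calc d - c ≤ (piQ q (minTail k) - piQ q (maxTail k)) / q ^ (n + 1) :=
            hgap'.sub_le_of_cylinder hq hk hη hν hα hN hνc (ha ▸ hda)
        _ < (piQ q (minTail k) - piQ q (maxTail k)) / q ^ n := by
            gcongr; linarith
        _ = b - a := by rw [ha', hb']; ring

/-- Witness: the point `π_q(w10(1^{k-1}0)^∞)`, with `w` the common prefix of `α` and `β`. -/
lemma bridgeGapRatio_mul_le_rightBridgeEnd_sub (hq : 1 < q) (hk : 2 ≤ k)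
    (hη : piQ q (maxTail k) < piQ q (minTail k)) (hgap : IsGap (piQ q '' Sset k) a b)
    {α β : ℕ → ℝ} (hα : α ∈ Sset k) (hβ : β ∈ Sset k) (ha : piQ q α = a) (hb : piQ q β = b)
    {n : ℕ} (hagree : ∀ j < n, α j = β j) (hn : α n ≠ β n) :
    bridgeGapRatio q k * (b - a) ≤ rightBridgeEnd (piQ q '' Sset k) a b - b := by
  obtain ⟨-, hβn, ha', hb'⟩ := hgap.piQ_eq hq hk hη hα hβ ha hb hagree hn
  rw [piQPrefix_congr hagree] at ha' hb'
  set μ := splice β (n + 1) (maxTail k)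
  have hμ : μ ∈ Sset k := splice_maxTail_mem_Sset hk hβ (Or.inr ⟨by omega, by simpa using hβn⟩)
  have hμval : piQ q μ = piQPrefix q β n + 1 / q ^ (n + 1) + piQ q (maxTail k) / q ^ (n + 1) := by
    rw [piQ_splice hq hβ.1 isDigitSeq_maxTail, piQPrefix_succ, hβn]
  have hne : piQ q (minTail k) - piQ q (maxTail k) ≠ 0 := by linarith
  have hsum := piQ_maxTail_add_piQ_minTail (k := k) hq
  have hratio : bridgeGapRatio q k * (b - a)
      = (q * piQ q (maxTail k) - piQ q (minTail k)) / q ^ (n + 1) := by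
    rw [ha', hb', bridgeGapRatio, pow_succ]; field_simp; ring
  rw [eq_div_iff (by linarith)] at hsum
  calc bridgeGapRatio q k * (b - a) = piQ q μ - b := by
        rw [hratio, hμval, hb', pow_succ]
        field_simp
        linear_combination hsum
    _ ≤ rightBridgeEnd (piQ q '' Sset k) a b - b := by
      refine sub_le_sub_right (le_rightBridgeEnd (bddAbove_piQ_image hq) ⟨μ, hμ, rfl⟩
        fun c d hgap' hbc hdμ => ?_) b
      have hN : ∀ j < n + 1, β j = μ j := fun j hj => (splice_of_lt hj).symm
      calc d - c ≤ (piQ q (minTail k) - piQ q (maxTail k)) / q ^ (n + 1) :=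
            hgap'.sub_le_of_cylinder hq hk hη hβ hμ hN (hb ▸ hbc) hdμ
        _ < (piQ q (minTail k) - piQ q (maxTail k)) / q ^ n := by
            gcongr; linarith
        _ = b - a := by rw [ha', hb']; ring

lemma ofReal_bridgeGapRatio_le_thickness (hq : 1 < q) (hk : 2 ≤ k)
    (hη : piQ q (maxTail k) < piQ q (minTail k)) :
    ENNReal.ofReal (bridgeGapRatio q k) ≤ thickness (piQ q '' Sset k) := by
  refine ofReal_le_thickness fun a b hgap => ?_
  obtain ⟨α, hα, ha⟩ := hgap.2.1
  obtain ⟨β, hβ, hb⟩ := hgap.2.2.1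
  obtain ⟨n, hagree, hn⟩ := hgap.exists_firstDiff ha hb
  exact ⟨bridgeGapRatio_mul_le_sub_leftBridgeStart hq hk hη hgap hα hβ ha hb hagree hn,
    bridgeGapRatio_mul_le_rightBridgeEnd_sub hq hk hη hgap hα hβ ha hb hagree hn⟩

end GapsOfSk

section Numerics

variable {q : ℝ} {k : ℕ}

lemma piQ_minTail_mul (hq : 1 < q) (hk : 1 ≤ k) :
    piQ q (minTail k) * (q * (q ^ k - 1)) = q ^ k := by
  have hpref : piQPrefix q (minTail k) k = 1 / q := by
    rw [piQPrefix, sum_eq_single_of_mem 0 (mem_range.2 hk) fun j hj hj0 => by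
      rw [minTail, digitFlip, maxTail_of_pos_of_lt (Nat.pos_of_ne_zero hj0) (mem_range.1 hj)]
      simp]
    simp [minTail, digitFlip, maxTail]
  have hshift : (fun m => minTail k (m + k)) = minTail k :=
    funext fun m => by simp only [minTail, digitFlip, maxTail_add_self]
  have h := piQ_eq_piQPrefix_add hq (isDigitSeq_minTail (k := k)) k
  rw [hshift, hpref] at h
  field_simp at h
  linear_combination h

lemma pow_mul_two_sub_lt_one_of_isBonacci {qk : ℝ} (hqk : IsBonacci k qk) (hlt : qk < q)
    (hk : 1 ≤ k) : q ^ k * (2 - q) < 1 := by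
  obtain ⟨⟨hqk1, -⟩, hbon⟩ := hqk
  have hqk0 : 0 < qk := by linarith
  set r := q / qk with hr
  have hr1 : 1 < r := (one_lt_div hqk0).2 hlt
  have hq : q = qk * r := by rw [hr]; field_simp
  have hsum : ∑ i ∈ range k, q ^ i < q ^ k := calc
    ∑ i ∈ range k, q ^ i = ∑ i ∈ range k, qk ^ i * r ^ i := by simp only [hq, mul_pow]
    _ < ∑ i ∈ range k, qk ^ i * r ^ k :=
        sum_lt_sum_of_nonempty (nonempty_range_iff.2 (by omega)) fun i hi => by
          gcongr
          exact mem_range.1 hi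
    _ = q ^ k := by rw [← sum_mul, ← hbon, hq, mul_pow]
  have hgeom := geom_sum_mul q k
  nlinarith

lemma piQ_maxTail_lt_piQ_minTail (hq : 1 < q) (hk : 1 ≤ k) (hE : q ^ k * (2 - q) < 1) :
    piQ q (maxTail k) < piQ q (minTail k) := by
  have h₁ := piQ_minTail_mul hq hk
  have hsum : (piQ q (maxTail k) + piQ q (minTail k)) * (q - 1) = 1 :=
    (eq_div_iff (by linarith)).1 (piQ_maxTail_add_piQ_minTail hq)
  have hD : 0 < q * (q - 1) * (q ^ k - 1) := by
    have : 0 < q - 1 := by linarith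
    have : 0 < q ^ k - 1 := by linarith [one_lt_pow₀ hq (by omega : k ≠ 0)]
    positivity
  have hgap : (piQ q (minTail k) - piQ q (maxTail k)) * (q * (q - 1) * (q ^ k - 1))
      = q * q ^ k - 2 * q ^ k + q := by
    linear_combination 2 * (q - 1) * h₁ - q * (q ^ k - 1) * hsum
  have : 0 < (piQ q (minTail k) - piQ q (maxTail k)) * (q * (q - 1) * (q ^ k - 1)) := by
    rw [hgap]; linarith
  linarith [pos_of_mul_pos_left this hD.le]

/-- Clearing the denominator `q(q-1)(q^k-1)` of `η₀` and `η₁` turns the claim into a polynomial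
inequality in `q` and `g = q^{k-3}`. -/
lemma pow_lt_bridgeGapRatio (hq : 1 < q) (hq2 : q < 2) (j : ℕ)
    (hE : q ^ (j + 3) * (2 - q) < 1) : q ^ j < bridgeGapRatio q (j + 3) := by
  have hη := piQ_maxTail_lt_piQ_minTail hq (by omega) hE
  have h₁ := piQ_minTail_mul (k := j + 3) hq (by omega)
  have hsum : (piQ q (maxTail (j + 3)) + piQ q (minTail (j + 3))) * (q - 1) = 1 :=
    (eq_div_iff (by linarith)).1 (piQ_maxTail_add_piQ_minTail hq)
  set η₀ := piQ q (maxTail (j + 3))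
  set η₁ := piQ q (minTail (j + 3))
  set g := q ^ j
  have hg : 1 ≤ g := one_le_pow₀ hq.le
  have hEg : q ^ (j + 3) = g * q ^ 3 := pow_add q j 3
  set E := q ^ (j + 3)
  set D := q * (q - 1) * (E - 1)
  have hD : 0 < D := by
    have : 0 < q - 1 := by linarith
    have : 0 < E - 1 := by linarith [one_lt_pow₀ hq (by omega : j + 3 ≠ 0)]
    positivity
  have hgap : (η₁ - η₀) * D = q * E - 2 * E + q := by
    linear_combination 2 * (q - 1) * h₁ - q * (E - 1) * hsum
  have hbridge : (q * η₀ - η₁) * D = E - q ^ 2 := by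
    linear_combination q * q * (E - 1) * hsum - (q + 1) * (q - 1) * h₁
  have hpoly : E - q ^ 2 - g * q * (q * E - 2 * E + q)
      = q ^ 2 * ((g - 1) * (q - 1) + (g ^ 2 - 1) * q ^ 2 * (2 - q) + (2 - q) * (q ^ 2 - 1)) := by
    rw [hEg]; ring
  have hpos : 0 < q ^ 2 * ((g - 1) * (q - 1) + (g ^ 2 - 1) * q ^ 2 * (2 - q) +
      (2 - q) * (q ^ 2 - 1)) := by
    have : 0 ≤ g - 1 := by linarith
    have : 0 < q ^ 2 - 1 := by nlinarith
    have : 0 ≤ g ^ 2 - 1 := by nlinarith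
    have : 0 < 2 - q := by linarith
    positivity
  rw [bridgeGapRatio, lt_div_iff₀ (by nlinarith)]
  refine lt_of_mul_lt_mul_right ?_ hD.le
  calc g * (q * (η₁ - η₀)) * D = g * q * (q * E - 2 * E + q) := by rw [← hgap]; ring
    _ < E - q ^ 2 := by linarith
    _ = (q * η₀ - η₁) * D := hbridge.symm

end Numerics

theorem thickness_proj_Sk
    (k : ℕ) (hk : 4 ≤ k) (qk : ℝ) (hqk : IsBonacci k qk)
    (q : ℝ) (hq : q ∈ Set.Ioo qk 2) :
    ENNReal.ofReal (q ^ ((k : ℤ) - 3)) < thickness (piQ q '' Sset k) := by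
  obtain ⟨j, rfl⟩ : ∃ j, k = j + 3 := ⟨k - 3, by omega⟩
  have hq1 : 1 < q := hqk.1.1.trans hq.1
  have hE := pow_mul_two_sub_lt_one_of_isBonacci hqk hq.1 (by omega)
  have hη := piQ_maxTail_lt_piQ_minTail hq1 (by omega) hE
  rw [show ((j + 3 : ℕ) : ℤ) - 3 = (j : ℤ) by push_cast; ring, zpow_natCast]
  calc ENNReal.ofReal (q ^ j) < ENNReal.ofReal (bridgeGapRatio q (j + 3)) :=
        (ENNReal.ofReal_lt_ofReal_iff_of_nonneg (by positivity)).2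
          (pow_lt_bridgeGapRatio hq1 hq.2 j hE)
    _ ≤ thickness (piQ q '' Sset (j + 3)) := ofReal_bridgeGapRatio_le_thickness hq1 (by omega) hη
end

section
/- Let q ∈ (G, 2) where G = (1+√5)/2. If x ∈ [0, 1/(q(q−1))] is such that f_0(x) = qx ∈ (U_q + 1) ∩ U_q, then x ∈ U_q^{(2)} ∩ J_q (so x lies in the switch region and has exactly two base q expansions), and hence q ∈ B_2. -/
open Set

/-! Reading off the first digit splits the expansions of `x` into `0` followed by an expansion of
`f_0(x) = q x` and `1` followed by an expansion of `f_1(x) = q x - 1`; hence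
`|Σ_q(x)| = |Σ_q(q x)| + |Σ_q(q x - 1)|`, which is `1 + 1` under the hypothesis on `q x`.
The inequality `q x = u + 1 ≥ 1` places `x` in the switch region. -/

variable {q : ℝ} {a : ℕ → ℝ}

def consSeq (d : ℝ) (a : ℕ → ℝ) : ℕ → ℝ
  | 0 => d
  | j + 1 => a j

lemma consSeq_head_tail (a : ℕ → ℝ) : consSeq (a 0) (fun j => a (j + 1)) = a := by
  funext j
  cases j <;> rfl

lemma consSeq_injective (d : ℝ) : Function.Injective (consSeq d) :=
  fun _ _ h => funext fun j => congrFun h (j + 1)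

lemma IsDigitSeq.summable_div_pow (hq : 1 < q) (ha : IsDigitSeq a) :
    Summable fun j => a j / q ^ (j + 1) := by
  have hq0 : 0 < q := one_pos.trans hq
  refine Summable.of_nonneg_of_le (fun j => ?_) (fun j => ?_)
    ((summable_geometric_of_lt_one (by positivity) (inv_lt_one_of_one_lt₀ hq)).div_const q)
  · rcases ha j with h | h <;> simp [h, hq0.le]
  · rw [pow_succ, ← div_div, inv_pow, ← one_div]
    gcongr
    rcases ha j with h | h <;> simp [h]

lemma IsDigitSeq.cons {d : ℝ} (hd : d = 0 ∨ d = 1) (ha : IsDigitSeq a) :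
    IsDigitSeq (consSeq d a) := by
  rintro (_ | j)
  exacts [hd, ha j]

lemma IsDigitSeq.tail (ha : IsDigitSeq a) : IsDigitSeq fun j => a (j + 1) :=
  fun j => ha (j + 1)

lemma piQ_cons (hq : 1 < q) (ha : IsDigitSeq a) (d : ℝ) :
    piQ q (consSeq d a) = (d + piQ q a) / q := by
  have hs : Summable fun j => consSeq d a j / q ^ (j + 1) :=
    (summable_nat_add_iff 1).mp <| by
      simpa [consSeq, pow_succ, ← div_div] using (ha.summable_div_pow hq).div_const q
  rw [piQ, hs.tsum_eq_zero_add, piQ, add_div, ← tsum_div_const]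
  simp [consSeq, pow_succ, div_div]

lemma sigmaSet_eq_union (hq : 1 < q) (x : ℝ) :
    SigmaSet q x =
      consSeq 0 '' SigmaSet q (q * x) ∪ consSeq 1 '' SigmaSet q (q * x - 1) := by
  have hq0 : q ≠ 0 := (one_pos.trans hq).ne'
  ext a
  constructor
  · rintro ⟨ha, rfl⟩
    have hval : piQ q a = (a 0 + piQ q fun j => a (j + 1)) / q := by
      rw [← piQ_cons hq ha.tail, consSeq_head_tail]
    have hmem : (fun j => a (j + 1)) ∈ SigmaSet q (q * piQ q a - a 0) :=
      ⟨ha.tail, by rw [hval]; field_simp; ring⟩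
    rcases ha 0 with h | h
    · exact .inl ⟨_, by simpa [h] using hmem, h ▸ consSeq_head_tail a⟩
    · exact .inr ⟨_, by simpa [h] using hmem, h ▸ consSeq_head_tail a⟩
  · rintro (⟨b, ⟨hb, hbx⟩, rfl⟩ | ⟨b, ⟨hb, hbx⟩, rfl⟩)
    · exact ⟨hb.cons (.inl rfl), by rw [piQ_cons hq hb, hbx, zero_add]; field_simp⟩
    · exact ⟨hb.cons (.inr rfl), by rw [piQ_cons hq hb, hbx]; field_simp; ring⟩

lemma encard_sigmaSet (hq : 1 < q) (x : ℝ) :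
    (SigmaSet q x).encard = (SigmaSet q (q * x)).encard + (SigmaSet q (q * x - 1)).encard := by
  have hdisj : Disjoint (consSeq (0 : ℝ) '' SigmaSet q (q * x))
      (consSeq 1 '' SigmaSet q (q * x - 1)) := by
    rw [Set.disjoint_left]
    rintro _ ⟨b, -, rfl⟩ ⟨c, -, h⟩
    exact one_ne_zero (congrFun h 0)
  rw [sigmaSet_eq_union hq, Set.encard_union_eq hdisj,
    (consSeq_injective _).injOn.encard_image,
    (consSeq_injective _).injOn.encard_image]

theorem B2_condition
    (q : ℝ) (hq : q ∈ Set.Ioo ((1 + Real.sqrt 5) / 2) 2) (x : ℝ)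
    (hx : x ∈ Set.Icc (0 : ℝ) (1 / (q * (q - 1))))
    (hfx : q * x ∈ ((fun u => u + 1) '' Uq q) ∩ Uq q) :
    x ∈ UqM q 2 ∩ Jq q ∧ q ∈ Bset 2 := by
  have hq1 : 1 < q := Real.one_lt_goldenRatio.trans hq.1
  have hq0 : 0 < q := one_pos.trans hq1
  obtain ⟨⟨u, ⟨⟨hu0, -⟩, hu⟩, hux⟩, -, hqx⟩ := hfx
  have hcard : (SigmaSet q x).encard = 2 := by
    rw [encard_sigmaSet hq1, hqx, ← hux, add_sub_cancel_right, hu]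
    rfl
  have hxIq : x ∈ Iq q := ⟨hx.1, hx.2.trans <|
    one_div_le_one_div_of_le (by nlinarith) (by nlinarith)⟩
  have hxJq : x ∈ Jq q := ⟨by rw [div_le_iff₀ hq0]; nlinarith, hx.2⟩
  exact ⟨⟨⟨hxIq, hcard⟩, hxJq⟩, ⟨hq1, hq.2⟩, x, hxIq, hcard⟩
end
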